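/- In a horizontally 𝔈-enriched double category 𝔻, horizontal composition in the Grothendieck construction ∫𝔻 is functorial: for composable squares, ((f,g,φ);(f',g',φ')) ⊙ ((g,h,ψ);(g',h',ψ')) = ((f,g,φ)⊙(g,h,ψ)) ; ((f',g',φ')⊙(g',h',ψ')), as a consequence of the interchange (distribution) law (𝔼(f,g)⊙𝔼(g,h));(𝔼(f',g')⊙𝔼(g',h')) = (𝔼(f,g);𝔼(f',g'))⊙(𝔼(g,h);𝔼(g',h')) and the compatibility of ⊙^𝔻 with the laxness cells C^𝔻. -/

import Mathlib

universe u

/-- The data of a (strict) double category: a vertical category, horizontal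
morphisms, squares, identity squares, vertical and horizontal composition of
squares, and unit squares on vertical morphisms. -/
structure DoubleCatData : Type (u + 1) where
  Obj : Type u
  Ver : Obj → Obj → Type u
  vid : ∀ X, Ver X X
  vcomp : ∀ {X Y Z}, Ver X Y → Ver Y Z → Ver X Z
  Hor : Obj → Obj → Type u
  hid : ∀ X, Hor X X
  hcomp : ∀ {X Y Z}, Hor X Y → Hor Y Z → Hor X Z
  Sq : ∀ {X Y X' Y'}, Hor X Y → Ver X X' → Ver Y Y' → Hor X' Y' → Type u
  sqId : ∀ {X Y} (u : Hor X Y), Sq u (vid X) (vid Y) u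
  sqVComp : ∀ {X Y X' Y' X'' Y''} {u : Hor X Y} {u' : Hor X' Y'} {u'' : Hor X'' Y''}
      {f : Ver X X'} {g : Ver Y Y'} {f' : Ver X' X''} {g' : Ver Y' Y''},
      Sq u f g u' → Sq u' f' g' u'' → Sq u (vcomp f f') (vcomp g g') u''
  sqHComp : ∀ {X Y Z X' Y' Z'} {u : Hor X Y} {v : Hor Y Z} {u' : Hor X' Y'} {v' : Hor Y' Z'}
      {f : Ver X X'} {g : Ver Y Y'} {h : Ver Z Z'},
      Sq u f g u' → Sq v g h v' → Sq (hcomp u v) f h (hcomp u' v')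
  sqUId : ∀ {X X'} (f : Ver X X'), Sq (hid X) f f (hid X')

/-- The axioms of a strict double category. -/
structure IsStrictDoubleCat (D : DoubleCatData.{u}) : Prop where
  vid_comp : ∀ {X Y} (f : D.Ver X Y), D.vcomp (D.vid X) f = f
  vcomp_id : ∀ {X Y} (f : D.Ver X Y), D.vcomp f (D.vid Y) = f
  vassoc : ∀ {W X Y Z} (f : D.Ver W X) (g : D.Ver X Y) (h : D.Ver Y Z),
    D.vcomp (D.vcomp f g) h = D.vcomp f (D.vcomp g h)
  hid_comp : ∀ {X Y} (u : D.Hor X Y), D.hcomp (D.hid X) u = u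
  hcomp_id : ∀ {X Y} (u : D.Hor X Y), D.hcomp u (D.hid Y) = u
  hassoc : ∀ {W X Y Z} (u : D.Hor W X) (v : D.Hor X Y) (w : D.Hor Y Z),
    D.hcomp (D.hcomp u v) w = D.hcomp u (D.hcomp v w)
  sq_id_vcomp : ∀ {X Y X' Y'} {u : D.Hor X Y} {u' : D.Hor X' Y'}
    {f : D.Ver X X'} {g : D.Ver Y Y'} (φ : D.Sq u f g u'),
    HEq (D.sqVComp (D.sqId u) φ) φ
  sq_vcomp_id : ∀ {X Y X' Y'} {u : D.Hor X Y} {u' : D.Hor X' Y'}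
    {f : D.Ver X X'} {g : D.Ver Y Y'} (φ : D.Sq u f g u'),
    HEq (D.sqVComp φ (D.sqId u')) φ
  sq_vassoc : ∀ {X₁ Y₁ X₂ Y₂ X₃ Y₃ X₄ Y₄}
    {u₁ : D.Hor X₁ Y₁} {u₂ : D.Hor X₂ Y₂} {u₃ : D.Hor X₃ Y₃} {u₄ : D.Hor X₄ Y₄}
    {f₁ : D.Ver X₁ X₂} {g₁ : D.Ver Y₁ Y₂} {f₂ : D.Ver X₂ X₃} {g₂ : D.Ver Y₂ Y₃}
    {f₃ : D.Ver X₃ X₄} {g₃ : D.Ver Y₃ Y₄}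
    (φ : D.Sq u₁ f₁ g₁ u₂) (ψ : D.Sq u₂ f₂ g₂ u₃) (χ : D.Sq u₃ f₃ g₃ u₄),
    HEq (D.sqVComp (D.sqVComp φ ψ) χ) (D.sqVComp φ (D.sqVComp ψ χ))
  sq_hid_comp : ∀ {X Y X' Y'} {u : D.Hor X Y} {u' : D.Hor X' Y'}
    {f : D.Ver X X'} {g : D.Ver Y Y'} (φ : D.Sq u f g u'),
    HEq (D.sqHComp (D.sqUId f) φ) φ
  sq_hcomp_id : ∀ {X Y X' Y'} {u : D.Hor X Y} {u' : D.Hor X' Y'}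
    {f : D.Ver X X'} {g : D.Ver Y Y'} (φ : D.Sq u f g u'),
    HEq (D.sqHComp φ (D.sqUId g)) φ
  sq_hassoc : ∀ {X Y Z W X' Y' Z' W'}
    {u : D.Hor X Y} {v : D.Hor Y Z} {w : D.Hor Z W}
    {u' : D.Hor X' Y'} {v' : D.Hor Y' Z'} {w' : D.Hor Z' W'}
    {f : D.Ver X X'} {g : D.Ver Y Y'} {h : D.Ver Z Z'} {k : D.Ver W W'}
    (φ : D.Sq u f g u') (ψ : D.Sq v g h v') (χ : D.Sq w h k w'),
    HEq (D.sqHComp (D.sqHComp φ ψ) χ) (D.sqHComp φ (D.sqHComp ψ χ))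
  sqUId_vid : ∀ X, D.sqUId (D.vid X) = D.sqId (D.hid X)
  sqUId_vcomp : ∀ {X X' X''} (f : D.Ver X X') (f' : D.Ver X' X''),
    D.sqUId (D.vcomp f f') = D.sqVComp (D.sqUId f) (D.sqUId f')
  sqId_hcomp : ∀ {X Y Z} (u : D.Hor X Y) (v : D.Hor Y Z),
    D.sqId (D.hcomp u v) = D.sqHComp (D.sqId u) (D.sqId v)
  interchange : ∀ {X₁ Y₁ Z₁ X₂ Y₂ Z₂ X₃ Y₃ Z₃}
    {u₁ : D.Hor X₁ Y₁} {v₁ : D.Hor Y₁ Z₁} {u₂ : D.Hor X₂ Y₂} {v₂ : D.Hor Y₂ Z₂}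
    {u₃ : D.Hor X₃ Y₃} {v₃ : D.Hor Y₃ Z₃}
    {f₁ : D.Ver X₁ X₂} {g₁ : D.Ver Y₁ Y₂} {h₁ : D.Ver Z₁ Z₂}
    {f₂ : D.Ver X₂ X₃} {g₂ : D.Ver Y₂ Y₃} {h₂ : D.Ver Z₂ Z₃}
    (φ : D.Sq u₁ f₁ g₁ u₂) (ψ : D.Sq v₁ g₁ h₁ v₂)
    (φ' : D.Sq u₂ f₂ g₂ u₃) (ψ' : D.Sq v₂ g₂ h₂ v₃),
    D.sqVComp (D.sqHComp φ ψ) (D.sqHComp φ' ψ') =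
      D.sqHComp (D.sqVComp φ φ') (D.sqVComp ψ ψ')

namespace DoubleCatData

/-- Transport a square along an equality of its left vertical side. -/
def castL (D : DoubleCatData.{u}) {X Y X' Y' : D.Obj} {u : D.Hor X Y} {u' : D.Hor X' Y'}
    {f f' : D.Ver X X'} {g : D.Ver Y Y'} (h : f = f') (φ : D.Sq u f g u') : D.Sq u f' g u' :=
  h ▸ φ

/-- Transport a square along an equality of its right vertical side. -/
def castR (D : DoubleCatData.{u}) {X Y X' Y' : D.Obj} {u : D.Hor X Y} {u' : D.Hor X' Y'}
    {f : D.Ver X X'} {g g' : D.Ver Y Y'} (h : g = g') (φ : D.Sq u f g u') : D.Sq u f g' u' :=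
  h ▸ φ

/-- Transport a square along an equality of its top horizontal side. -/
def castTop (D : DoubleCatData.{u}) {X Y X' Y' : D.Obj} {u u₂ : D.Hor X Y} {u' : D.Hor X' Y'}
    {f : D.Ver X X'} {g : D.Ver Y Y'} (h : u = u₂) (φ : D.Sq u f g u') : D.Sq u₂ f g u' :=
  h ▸ φ

/-- Transport a square along an equality of its bottom horizontal side. -/
def castBot (D : DoubleCatData.{u}) {X Y X' Y' : D.Obj} {u : D.Hor X Y} {u' u₂ : D.Hor X' Y'}
    {f : D.Ver X X'} {g : D.Ver Y Y'} (h : u' = u₂) (φ : D.Sq u f g u') : D.Sq u f g u₂ :=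
  h ▸ φ

end DoubleCatData

/-- A (strict) monoidal double category: a strict double category whose
vertical and arrow categories are (strict) monoidal and whose structure
functors `S, T, U, ⊙` are strict monoidal. -/
structure MonDoubleCat extends DoubleCatData.{u} : Type (u + 1) where
  strict : IsStrictDoubleCat toDoubleCatData
  unit : Obj
  tObj : Obj → Obj → Obj
  tVer : ∀ {X Y X' Y'}, Ver X Y → Ver X' Y' → Ver (tObj X X') (tObj Y Y')
  tHor : ∀ {X Y X' Y'}, Hor X Y → Hor X' Y' → Hor (tObj X X') (tObj Y Y')
  tSq : ∀ {X Y X' Y' Z W Z' W'} {u : Hor X Y} {v : Hor X' Y'}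
    {f : Ver X X'} {g : Ver Y Y'}
    {u' : Hor Z W} {v' : Hor Z' W'} {f' : Ver Z Z'} {g' : Ver W W'},
    Sq u f g v → Sq u' f' g' v' →
      Sq (tHor u u') (tVer f f') (tVer g g') (tHor v v')
  tObj_unit_left : ∀ A, tObj unit A = A
  tObj_unit_right : ∀ A, tObj A unit = A
  tObj_assoc : ∀ A B C, tObj (tObj A B) C = tObj A (tObj B C)
  tVer_vid : ∀ X Y, tVer (vid X) (vid Y) = vid (tObj X Y)
  tVer_vcomp : ∀ {X Y Z X' Y' Z'} (f : Ver X Y) (g : Ver Y Z)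
    (f' : Ver X' Y') (g' : Ver Y' Z'),
    tVer (vcomp f g) (vcomp f' g') = vcomp (tVer f f') (tVer g g')
  tHor_hid : ∀ X Y, tHor (hid X) (hid Y) = hid (tObj X Y)
  tHor_hcomp : ∀ {X Y Z X' Y' Z'} (u : Hor X Y) (v : Hor Y Z)
    (u' : Hor X' Y') (v' : Hor Y' Z'),
    tHor (hcomp u v) (hcomp u' v') = hcomp (tHor u u') (tHor v v')
  tVer_unit_left : ∀ {X Y} (f : Ver X Y), HEq (tVer (vid unit) f) f
  tHor_unit_left : ∀ {X Y} (u : Hor X Y), HEq (tHor (hid unit) u) u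
  tVer_assoc : ∀ {X Y X' Y' X'' Y''} (f : Ver X Y) (g : Ver X' Y')
    (h : Ver X'' Y''), HEq (tVer (tVer f g) h) (tVer f (tVer g h))
  tHor_assoc : ∀ {X Y X' Y' X'' Y''} (u : Hor X Y) (v : Hor X' Y')
    (w : Hor X'' Y''), HEq (tHor (tHor u v) w) (tHor u (tHor v w))
  tSq_sqId : ∀ {X Y X' Y'} (u : Hor X Y) (v : Hor X' Y'),
    HEq (tSq (sqId u) (sqId v)) (sqId (tHor u v))
  tSq_sqUId : ∀ {X Y X' Y'} (f : Ver X Y) (g : Ver X' Y'),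
    HEq (tSq (sqUId f) (sqUId g)) (sqUId (tVer f g))
  tSq_sqVComp : ∀ {X₁ Y₁ X₂ Y₂ X₃ Y₃ Z₁ W₁ Z₂ W₂ Z₃ W₃}
    {u₁ : Hor X₁ Y₁} {u₂ : Hor X₂ Y₂} {u₃ : Hor X₃ Y₃}
    {f₁ : Ver X₁ X₂} {g₁ : Ver Y₁ Y₂} {f₂ : Ver X₂ X₃} {g₂ : Ver Y₂ Y₃}
    {v₁ : Hor Z₁ W₁} {v₂ : Hor Z₂ W₂} {v₃ : Hor Z₃ W₃}
    {p₁ : Ver Z₁ Z₂} {q₁ : Ver W₁ W₂} {p₂ : Ver Z₂ Z₃} {q₂ : Ver W₂ W₃}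
    (α : Sq u₁ f₁ g₁ u₂) (β : Sq u₂ f₂ g₂ u₃)
    (γ : Sq v₁ p₁ q₁ v₂) (δ : Sq v₂ p₂ q₂ v₃),
    HEq (tSq (sqVComp α β) (sqVComp γ δ)) (sqVComp (tSq α γ) (tSq β δ))
  tSq_sqHComp : ∀ {X Y Z X' Y' Z' A B C A' B' C'}
    {u : Hor X Y} {v : Hor Y Z} {u' : Hor X' Y'} {v' : Hor Y' Z'}
    {f : Ver X X'} {g : Ver Y Y'} {h : Ver Z Z'}
    {a : Hor A B} {b : Hor B C} {a' : Hor A' B'} {b' : Hor B' C'}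
    {p : Ver A A'} {q : Ver B B'} {r : Ver C C'}
    (α : Sq u f g u') (β : Sq v g h v')
    (γ : Sq a p q a') (δ : Sq b q r b'),
    HEq (tSq (sqHComp α β) (sqHComp γ δ)) (sqHComp (tSq α γ) (tSq β δ))

/-- The right unitor `ρ : 𝟙 → 𝟙 ⊗ 𝟙` (an identity up to the strict unit
law). -/
def MonDoubleCat.rho (M : MonDoubleCat.{u}) : M.Ver M.unit (M.tObj M.unit M.unit) :=
  cast (congrArg (fun A => M.Ver A (M.tObj M.unit M.unit)) (M.tObj_unit_left M.unit))
    (M.vid (M.tObj M.unit M.unit))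

/-- A horizontally `𝔈`-enriched double category: a vertical category `𝕍`, a
lax functor `𝔼 : 𝕍×𝕍 → 𝔢H` with laxness globular cells `I` and `C`, units
`U^𝔻` and compositions `⊙^𝔻` (both on objects — vertical morphisms of `𝔈` —
and on vertical morphisms — squares of `𝔈`), satisfying the lax-functorial
equalities, the enriched unit and associativity axioms, and the distribution
(interchange) law. -/
structure EnrDC (M : MonDoubleCat.{u}) : Type (u + 1) where
  Obj : Type u
  Ver : Obj → Obj → Type u
  vid : ∀ X, Ver X X
  vcomp : ∀ {X Y Z}, Ver X Y → Ver Y Z → Ver X Z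
  vid_comp : ∀ {X Y} (f : Ver X Y), vcomp (vid X) f = f
  vcomp_id : ∀ {X Y} (f : Ver X Y), vcomp f (vid Y) = f
  vassoc : ∀ {W X Y Z} (f : Ver W X) (g : Ver X Y) (h : Ver Y Z),
    vcomp (vcomp f g) h = vcomp f (vcomp g h)
  /-- `𝔼` on pairs of objects -/
  Eo : Obj → Obj → M.Obj
  /-- `𝔼` on pairs of vertical morphisms: a horizontal morphism of `𝔈` -/
  Eh : ∀ {X Y X' Y'}, Ver X X' → Ver Y Y' → M.Hor (Eo X Y) (Eo X' Y')
  /-- laxness globular cell `I^𝔼_{X,Y} : id_{𝔼(X,Y)} ⇒ 𝔼(id_X,id_Y)` -/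
  I : ∀ X Y, M.Sq (M.hid (Eo X Y)) (M.vid (Eo X Y)) (M.vid (Eo X Y))
    (Eh (vid X) (vid Y))
  /-- laxness globular cell `C^𝔻 : 𝔼(f,g)⊙𝔼(f',g') ⇒ 𝔼(f;f',g;g')` -/
  C : ∀ {X Y X' Y' X'' Y''} (f : Ver X X') (g : Ver Y Y')
    (f' : Ver X' X'') (g' : Ver Y' Y''),
    M.Sq (M.hcomp (Eh f g) (Eh f' g')) (M.vid (Eo X Y)) (M.vid (Eo X'' Y''))
      (Eh (vcomp f f') (vcomp g g'))
  /-- units `U^𝔻_X ∈ 𝔢V(𝟙, 𝔼(X,X))` -/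
  eU : ∀ X, M.Ver M.unit (Eo X X)
  /-- unit squares `U^𝔻_f ∈ 𝔢A(id_𝟙, 𝔼(f,f))` -/
  eUsq : ∀ {X X'} (f : Ver X X'), M.Sq (M.hid M.unit) (eU X) (eU X') (Eh f f)
  /-- compositions `⊙^𝔻_{X,Y,Z} ∈ 𝔢V(𝔼(X,Y)⊗𝔼(Y,Z), 𝔼(X,Z))` -/
  eC : ∀ X Y Z, M.Ver (M.tObj (Eo X Y) (Eo Y Z)) (Eo X Z)
  /-- composition squares `⊙^𝔻_{f,g,h} ∈ 𝔢A(𝔼(f,g)⊗𝔼(g,h), 𝔼(f,h))` -/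
  eCsq : ∀ {X Y Z X' Y' Z'} (f : Ver X X') (g : Ver Y Y') (h : Ver Z Z'),
    M.Sq (M.tHor (Eh f g) (Eh g h)) (eC X Y Z) (eC X' Y' Z') (Eh f h)
  -- lax-functorial equalities
  lax_unit_id : ∀ X, HEq (eUsq (vid X)) (M.sqVComp (M.sqUId (eU X)) (I X X))
  lax_unit_comp : ∀ {X₁ X₂ X₃} (f : Ver X₁ X₂) (g : Ver X₂ X₃),
    HEq (eUsq (vcomp f g)) (M.sqVComp (M.sqHComp (eUsq f) (eUsq g)) (C f f g g))
  lax_comp_id : ∀ X Y Z,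
    HEq (M.sqVComp (M.tSq (I X Y) (I Y Z)) (eCsq (vid X) (vid Y) (vid Z)))
      (M.sqVComp (M.sqUId (eC X Y Z)) (I X Z))
  lax_comp_comp : ∀ {X₁ Y₁ Z₁ X₂ Y₂ Z₂ X₃ Y₃ Z₃}
    (f : Ver X₁ X₂) (g : Ver Y₁ Y₂) (h : Ver Z₁ Z₂)
    (f' : Ver X₂ X₃) (g' : Ver Y₂ Y₃) (h' : Ver Z₂ Z₃),
    HEq (M.sqVComp (M.tSq (C f g f' g') (C g h g' h'))
        (eCsq (vcomp f f') (vcomp g g') (vcomp h h')))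
      (M.sqVComp (M.sqHComp (eCsq f g h) (eCsq f' g' h')) (C f h f' h'))
  -- enriched unitality and associativity (on hom objects)
  unit_left : ∀ X Y,
    HEq (M.vcomp (M.tVer (eU X) (M.vid (Eo X Y))) (eC X X Y)) (M.vid (Eo X Y))
  unit_right : ∀ X Y,
    HEq (M.vcomp (M.tVer (M.vid (Eo X Y)) (eU Y)) (eC X Y Y)) (M.vid (Eo X Y))
  assoc : ∀ X Y Z W,
    HEq (M.vcomp (M.tVer (eC X Y Z) (M.vid (Eo Z W))) (eC X Z W))
      (M.vcomp (M.tVer (M.vid (Eo X Y)) (eC Y Z W)) (eC X Y W))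
  -- enriched unitality and associativity (on squares)
  sq_unit_left : ∀ {X Y X' Y'} (f : Ver X X') (g : Ver Y Y'),
    HEq (M.sqVComp (M.tSq (eUsq f) (M.sqId (Eh f g))) (eCsq f f g))
      (M.sqId (Eh f g))
  sq_unit_right : ∀ {X Y X' Y'} (f : Ver X X') (g : Ver Y Y'),
    HEq (M.sqVComp (M.tSq (M.sqId (Eh f g)) (eUsq g)) (eCsq f g g))
      (M.sqId (Eh f g))
  sq_assoc : ∀ {X Y Z W X' Y' Z' W'} (f : Ver X X') (g : Ver Y Y')
    (h : Ver Z Z') (k : Ver W W'),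
    HEq (M.sqVComp (M.tSq (eCsq f g h) (M.sqId (Eh h k))) (eCsq f h k))
      (M.sqVComp (M.tSq (M.sqId (Eh f g)) (eCsq g h k)) (eCsq f g k))
  -- distribution (interchange) law
  distrib : ∀ {X Y Z X' Y' Z' X'' Y'' Z''}
    (f : Ver X X') (g : Ver Y Y') (h : Ver Z Z')
    (f' : Ver X' X'') (g' : Ver Y' Y'') (h' : Ver Z' Z''),
    M.hcomp (M.tHor (Eh f g) (Eh g h)) (M.tHor (Eh f' g') (Eh g' h')) =
      M.tHor (M.hcomp (Eh f g) (Eh f' g')) (M.hcomp (Eh g h) (Eh g' h'))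

/-- The Grothendieck construction of an `𝔈`-enriched double category: the
underlying non-enriched double category, with horizontal morphisms
`u ∈ 𝔢V(𝟙, 𝔼(X,Y))`, squares `φ ∈ 𝔢A(U^𝔈_𝟙, 𝔼(f,g))` with source `u` and
target `v`, unit `U_X := U^𝔻_X`, `U_f := U^𝔻_f`, and horizontal composition
`u ⊙ v := ρ;(u⊗v);⊙^𝔻` and `φ ⊙ ψ := U^𝔈_ρ;(φ⊗ψ);⊙^𝔻_{f,g,h}`. -/
def grothDC (M : MonDoubleCat.{u}) (D : EnrDC.{u} M) : DoubleCatData.{u} where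
  Obj := D.Obj
  Ver := D.Ver
  vid := D.vid
  vcomp := D.vcomp
  Hor X Y := M.Ver M.unit (D.Eo X Y)
  hid := D.eU
  hcomp {X Y Z} u v := M.vcomp M.rho (M.vcomp (M.tVer u v) (D.eC X Y Z))
  Sq {X Y X' Y'} u f g v := M.Sq (M.hid M.unit) u v (D.Eh f g)
  sqId {X Y} u :=
    M.castL (M.strict.vcomp_id u) (M.castR (M.strict.vcomp_id u)
      (M.sqVComp (M.sqUId u) (D.I X Y)))
  sqVComp {X Y X' Y' X'' Y''} {u u' u''} {f g f' g'} φ ψ :=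
    M.castL (M.strict.vcomp_id u) (M.castR (M.strict.vcomp_id u'')
      (M.sqVComp
        (M.castTop (M.strict.hid_comp (M.hid M.unit)) (M.sqHComp φ ψ))
        (D.C f g f' g')))
  sqHComp {X Y Z X' Y' Z'} {u v u' v'} {f g h} φ ψ :=
    M.sqVComp (M.sqUId M.rho)
      (M.sqVComp (M.castTop (M.tHor_hid M.unit M.unit) (M.tSq φ ψ))
        (D.eCsq f g h))
  sqUId := D.eUsq

/-! Squares of `∫𝔻` are squares of `𝔈` whose boundaries (e.g. `U_𝟙 ⊙ U_𝟙` versus `U_𝟙`, or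
`(𝔼 ⊗ 𝔼) ⊙ (𝔼 ⊗ 𝔼)` versus `(𝔼 ⊙ 𝔼) ⊗ (𝔼 ⊙ 𝔼)`) agree only propositionally, so both sides of the
interchange law are compared with `HEq` to a common normal form
`U_ρ ; ((φ ⊙ φ') ⊗ (ψ ⊙ ψ')) ; (C ⊗ C) ; ⊙^𝔻`.
On the left, the interchange law of `𝔈` splits the horizontal composite of two three-step
vertical composites, `U_ρ ⊙ U_ρ = U_ρ`, `⊗` commutes with `⊙`, and the lax-functoriality of
`⊙^𝔻` trades `(⊙^𝔻 ⊙ ⊙^𝔻) ; C` for `(C ⊗ C) ; ⊙^𝔻`; the distribution law matches the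
boundaries in that last step. On the right, `⊗` commutes with vertical composition. -/

namespace DoubleCatData

variable {D : DoubleCatData.{u}} {X Y X' Y' : D.Obj}

theorem castL_heq {u : D.Hor X Y} {u' : D.Hor X' Y'} {f f' : D.Ver X X'} {g : D.Ver Y Y'}
    (h : f = f') (φ : D.Sq u f g u') : D.castL h φ ≍ φ := by
  subst h; rfl

theorem castR_heq {u : D.Hor X Y} {u' : D.Hor X' Y'} {f : D.Ver X X'} {g g' : D.Ver Y Y'}
    (h : g = g') (φ : D.Sq u f g u') : D.castR h φ ≍ φ := by
  subst h; rfl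

theorem castTop_heq {u u₂ : D.Hor X Y} {u' : D.Hor X' Y'} {f : D.Ver X X'} {g : D.Ver Y Y'}
    (h : u = u₂) (φ : D.Sq u f g u') : D.castTop h φ ≍ φ := by
  subst h; rfl

theorem sqVComp_heq_sqVComp {X'' Y'' : D.Obj}
    {u w : D.Hor X Y} {u' w' : D.Hor X' Y'} {u'' w'' : D.Hor X'' Y''}
    {f p : D.Ver X X'} {g q : D.Ver Y Y'} {f' p' : D.Ver X' X''} {g' q' : D.Ver Y' Y''}
    {φ : D.Sq u f g u'} {ψ : D.Sq u' f' g' u''} {φ₂ : D.Sq w p q w'} {ψ₂ : D.Sq w' p' q' w''}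
    (hu : u = w) (hu' : u' = w') (hu'' : u'' = w'')
    (hf : f = p) (hg : g = q) (hf' : f' = p') (hg' : g' = q')
    (hφ : φ ≍ φ₂) (hψ : ψ ≍ ψ₂) :
    D.sqVComp φ ψ ≍ D.sqVComp φ₂ ψ₂ := by
  subst hu hu' hu'' hf hg hf' hg' hφ hψ; rfl

theorem sqHComp_heq_sqHComp {Z Z' : D.Obj}
    {u w : D.Hor X Y} {v x : D.Hor Y Z} {u' w' : D.Hor X' Y'} {v' x' : D.Hor Y' Z'}
    {f p : D.Ver X X'} {g q : D.Ver Y Y'} {h r : D.Ver Z Z'}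
    {φ : D.Sq u f g u'} {ψ : D.Sq v g h v'} {φ₂ : D.Sq w p q w'} {ψ₂ : D.Sq x q r x'}
    (hu : u = w) (hv : v = x) (hu' : u' = w') (hv' : v' = x')
    (hf : f = p) (hg : g = q) (hh : h = r)
    (hφ : φ ≍ φ₂) (hψ : ψ ≍ ψ₂) :
    D.sqHComp φ ψ ≍ D.sqHComp φ₂ ψ₂ := by
  subst hu hv hu' hv' hf hg hh hφ hψ; rfl

end DoubleCatData

theorem IsStrictDoubleCat.interchange₃ {D : DoubleCatData.{u}} (hD : IsStrictDoubleCat D)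
    {X₁ Y₁ Z₁ X₂ Y₂ Z₂ X₃ Y₃ Z₃ X₄ Y₄ Z₄ : D.Obj}
    {u₁ : D.Hor X₁ Y₁} {v₁ : D.Hor Y₁ Z₁} {u₂ : D.Hor X₂ Y₂} {v₂ : D.Hor Y₂ Z₂}
    {u₃ : D.Hor X₃ Y₃} {v₃ : D.Hor Y₃ Z₃} {u₄ : D.Hor X₄ Y₄} {v₄ : D.Hor Y₄ Z₄}
    {f₁ : D.Ver X₁ X₂} {g₁ : D.Ver Y₁ Y₂} {h₁ : D.Ver Z₁ Z₂}
    {f₂ : D.Ver X₂ X₃} {g₂ : D.Ver Y₂ Y₃} {h₂ : D.Ver Z₂ Z₃}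
    {f₃ : D.Ver X₃ X₄} {g₃ : D.Ver Y₃ Y₄} {h₃ : D.Ver Z₃ Z₄}
    (α : D.Sq u₁ f₁ g₁ u₂) (β : D.Sq u₂ f₂ g₂ u₃) (γ : D.Sq u₃ f₃ g₃ u₄)
    (α' : D.Sq v₁ g₁ h₁ v₂) (β' : D.Sq v₂ g₂ h₂ v₃) (γ' : D.Sq v₃ g₃ h₃ v₄) :
    D.sqHComp (D.sqVComp α (D.sqVComp β γ)) (D.sqVComp α' (D.sqVComp β' γ')) =
      D.sqVComp (D.sqHComp α α') (D.sqVComp (D.sqHComp β β') (D.sqHComp γ γ')) := by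
  rw [← hD.interchange, ← hD.interchange]

namespace MonDoubleCat

theorem tSq_heq_tSq {M : MonDoubleCat.{u}} {X Y X' Y' Z W Z' W' : M.Obj}
    {u u₂ : M.Hor X Y} {v v₂ : M.Hor X' Y'} {f f₂ : M.Ver X X'} {g g₂ : M.Ver Y Y'}
    {u' u₂' : M.Hor Z W} {v' v₂' : M.Hor Z' W'} {f' f₂' : M.Ver Z Z'} {g' g₂' : M.Ver W W'}
    {α : M.Sq u f g v} {β : M.Sq u' f' g' v'} {α₂ : M.Sq u₂ f₂ g₂ v₂} {β₂ : M.Sq u₂' f₂' g₂' v₂'}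
    (hu : u = u₂) (hv : v = v₂) (hf : f = f₂) (hg : g = g₂)
    (hu' : u' = u₂') (hv' : v' = v₂') (hf' : f' = f₂') (hg' : g' = g₂')
    (hα : α ≍ α₂) (hβ : β ≍ β₂) :
    M.tSq α β ≍ M.tSq α₂ β₂ := by
  subst hu hv hf hg hu' hv' hf' hg' hα hβ; rfl

theorem tHor_hcomp_hid (M : MonDoubleCat.{u}) (A B : M.Obj) :
    M.tHor (M.hcomp (M.hid A) (M.hid A)) (M.hcomp (M.hid B) (M.hid B)) = M.hid (M.tObj A B) := by
  rw [M.strict.hid_comp, M.strict.hid_comp, M.tHor_hid]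

theorem sqHComp_castTop_tSq_heq {M : MonDoubleCat.{u}} {X Y Z X' Y' Z' A B C A' B' C' : M.Obj}
    {u : M.Hor X Y} {v : M.Hor Y Z} {u' : M.Hor X' Y'} {v' : M.Hor Y' Z'}
    {f : M.Ver X X'} {g : M.Ver Y Y'} {h : M.Ver Z Z'}
    {a : M.Hor A B} {b : M.Hor B C} {a' : M.Hor A' B'} {b' : M.Hor B' C'}
    {p : M.Ver A A'} {q : M.Ver B B'} {r : M.Ver C C'}
    {t : M.Hor (M.tObj X A) (M.tObj Y B)} {t' : M.Hor (M.tObj Y B) (M.tObj Z C)}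
    (α : M.Sq u f g u') (β : M.Sq v g h v') (γ : M.Sq a p q a') (δ : M.Sq b q r b')
    (ht : M.tHor u a = t) (ht' : M.tHor v b = t') :
    M.sqHComp (M.castTop ht (M.tSq α γ)) (M.castTop ht' (M.tSq β δ)) ≍
      M.tSq (M.sqHComp α β) (M.sqHComp γ δ) :=
  (M.sqHComp_heq_sqHComp ht.symm ht'.symm rfl rfl rfl rfl rfl
    (M.castTop_heq _ _) (M.castTop_heq _ _)).trans (M.tSq_sqHComp α β γ δ).symm

end MonDoubleCat

section Grothendieck

variable (M : MonDoubleCat.{u}) (D : EnrDC.{u} M)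

theorem grothDC_sqVComp_heq {X Y X' Y' X'' Y'' : D.Obj} {u : (grothDC M D).Hor X Y}
    {u' : (grothDC M D).Hor X' Y'} {u'' : (grothDC M D).Hor X'' Y''}
    {f : D.Ver X X'} {g : D.Ver Y Y'} {f' : D.Ver X' X''} {g' : D.Ver Y' Y''}
    (φ : (grothDC M D).Sq u f g u') (ψ : (grothDC M D).Sq u' f' g' u'') :
    (grothDC M D).sqVComp φ ψ ≍ M.sqVComp (M.sqHComp φ ψ) (D.C f g f' g') :=
  (M.castL_heq _ _).trans <| (M.castR_heq _ _).trans <|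
    M.sqVComp_heq_sqVComp (M.strict.hid_comp _).symm rfl rfl rfl rfl rfl rfl
      (M.castTop_heq _ _) HEq.rfl

variable {X₁ Y₁ Z₁ X₂ Y₂ Z₂ X₃ Y₃ Z₃ : D.Obj}
  {u₁ : (grothDC M D).Hor X₁ Y₁} {v₁ : (grothDC M D).Hor Y₁ Z₁}
  {u₂ : (grothDC M D).Hor X₂ Y₂} {v₂ : (grothDC M D).Hor Y₂ Z₂}
  {u₃ : (grothDC M D).Hor X₃ Y₃} {v₃ : (grothDC M D).Hor Y₃ Z₃}
  {f₁ : D.Ver X₁ X₂} {g₁ : D.Ver Y₁ Y₂} {h₁ : D.Ver Z₁ Z₂}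
  {f₂ : D.Ver X₂ X₃} {g₂ : D.Ver Y₂ Y₃} {h₂ : D.Ver Z₂ Z₃}
  (φ : (grothDC M D).Sq u₁ f₁ g₁ u₂) (ψ : (grothDC M D).Sq v₁ g₁ h₁ v₂)
  (φ' : (grothDC M D).Sq u₂ f₂ g₂ u₃) (ψ' : (grothDC M D).Sq v₂ g₂ h₂ v₃)

theorem grothDC_sqVComp_sqHComp_heq :
    (grothDC M D).sqVComp ((grothDC M D).sqHComp φ ψ) ((grothDC M D).sqHComp φ' ψ') ≍
      M.sqVComp (M.sqUId M.rho) (M.castTop (M.tHor_hcomp_hid M.unit M.unit)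
        (M.sqVComp (M.tSq (M.sqHComp φ φ') (M.sqHComp ψ ψ'))
          (M.sqVComp (M.tSq (D.C f₁ g₁ f₂ g₂) (D.C g₁ h₁ g₂ h₂))
            (D.eCsq (D.vcomp f₁ f₂) (D.vcomp g₁ g₂) (D.vcomp h₁ h₂))))) := by
  refine (grothDC_sqVComp_heq M D _ _).trans <|
    (heq_of_eq (congrArg (M.sqVComp · (D.C f₁ h₁ f₂ h₂)) (M.strict.interchange₃ _ _ _ _ _ _))).trans <|
    (M.strict.sq_vassoc _ _ _).trans <|
    M.sqVComp_heq_sqVComp ?_ ?_ rfl rfl rfl ?_ ?_ (M.strict.sq_hid_comp _) <|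
    (M.strict.sq_vassoc _ _ _).trans <|
    (M.sqVComp_heq_sqVComp ?_ ?_ rfl rfl rfl ?_ ?_ (M.sqHComp_castTop_tSq_heq φ φ' ψ ψ' _ _)
      (D.lax_comp_comp f₁ g₁ h₁ f₂ g₂ h₂).symm).trans (M.castTop_heq _ _).symm
  all_goals simp only [M.strict.hid_comp, M.tHor_hid, M.strict.vcomp_id, M.tVer_vid,
    M.strict.vid_comp, D.distrib]

theorem grothDC_sqHComp_sqVComp_heq :
    (grothDC M D).sqHComp ((grothDC M D).sqVComp φ φ') ((grothDC M D).sqVComp ψ ψ') ≍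
      M.sqVComp (M.sqUId M.rho) (M.castTop (M.tHor_hcomp_hid M.unit M.unit)
        (M.sqVComp (M.tSq (M.sqHComp φ φ') (M.sqHComp ψ ψ'))
          (M.sqVComp (M.tSq (D.C f₁ g₁ f₂ g₂) (D.C g₁ h₁ g₂ h₂))
            (D.eCsq (D.vcomp f₁ f₂) (D.vcomp g₁ g₂) (D.vcomp h₁ h₂))))) := by
  have hid_eq := (M.strict.hid_comp (M.hid M.unit)).symm
  have tSq_heq : M.tSq ((grothDC M D).sqVComp φ φ') ((grothDC M D).sqVComp ψ ψ') ≍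
      M.sqVComp (M.tSq (M.sqHComp φ φ') (M.sqHComp ψ ψ'))
        (M.tSq (D.C f₁ g₁ f₂ g₂) (D.C g₁ h₁ g₂ h₂)) :=
    (M.tSq_heq_tSq hid_eq rfl (M.strict.vcomp_id _).symm (M.strict.vcomp_id _).symm
      hid_eq rfl (M.strict.vcomp_id _).symm (M.strict.vcomp_id _).symm
      (grothDC_sqVComp_heq M D φ φ') (grothDC_sqVComp_heq M D ψ ψ')).trans
      (M.tSq_sqVComp _ _ _ _)
  refine M.sqVComp_heq_sqVComp rfl ?_ rfl rfl rfl ?_ ?_ HEq.rfl <|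
    (M.sqVComp_heq_sqVComp ?_ rfl rfl ?_ ?_ rfl rfl ((M.castTop_heq _ _).trans tSq_heq)
      HEq.rfl).trans <| (M.strict.sq_vassoc _ _ _).trans (M.castTop_heq _ _).symm
  all_goals simp only [M.strict.hid_comp, M.tHor_hid, M.strict.vcomp_id, M.tVer_vid,
    M.strict.vid_comp]

end Grothendieck

theorem groth_hcomp_functorial (M : MonDoubleCat.{u}) (D : EnrDC.{u} M)
    {X₁ Y₁ Z₁ X₂ Y₂ Z₂ X₃ Y₃ Z₃ : D.Obj}
    {u₁ : (grothDC M D).Hor X₁ Y₁} {v₁ : (grothDC M D).Hor Y₁ Z₁}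
    {u₂ : (grothDC M D).Hor X₂ Y₂} {v₂ : (grothDC M D).Hor Y₂ Z₂}
    {u₃ : (grothDC M D).Hor X₃ Y₃} {v₃ : (grothDC M D).Hor Y₃ Z₃}
    {f₁ : D.Ver X₁ X₂} {g₁ : D.Ver Y₁ Y₂} {h₁ : D.Ver Z₁ Z₂}
    {f₂ : D.Ver X₂ X₃} {g₂ : D.Ver Y₂ Y₃} {h₂ : D.Ver Z₂ Z₃}
    (φ : (grothDC M D).Sq u₁ f₁ g₁ u₂) (ψ : (grothDC M D).Sq v₁ g₁ h₁ v₂)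
    (φ' : (grothDC M D).Sq u₂ f₂ g₂ u₃) (ψ' : (grothDC M D).Sq v₂ g₂ h₂ v₃) :
    (grothDC M D).sqVComp ((grothDC M D).sqHComp φ ψ) ((grothDC M D).sqHComp φ' ψ') =
      (grothDC M D).sqHComp ((grothDC M D).sqVComp φ φ') ((grothDC M D).sqVComp ψ ψ') :=
  eq_of_heq ((grothDC_sqVComp_sqHComp_heq M D φ ψ φ' ψ').trans
    (grothDC_sqHComp_sqVComp_heq M D φ ψ φ' ψ').symm)
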